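/- arXiv:2101.10323 — 2 statements merged into one kernel-verified Lean document; each statement's English description precedes it below -/
import Mathlib

section
/- The eigenvalues of A·(Aᵀ)⁻¹ for an invertible matrix A come in reciprocal pairs: if λ is an eigenvalue of A(Aᵀ)⁻¹ then so is 1/λ. -/
/-!
For `M = A (Aᵀ)⁻¹` one has `M⁻¹ = Aᵀ A⁻¹` and `Mᵀ = A⁻¹ Aᵀ`. Since `XY` and `YX` have the same
characteristic polynomial, so do `M⁻¹` and `Mᵀ`, hence `M⁻¹` and `M`. The roots of the
characteristic polynomial of `M⁻¹` are the inverses of those of `M`.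
-/

open Matrix

namespace Matrix

variable {n : Type*} [Fintype n] [DecidableEq n]

theorem isRoot_charpoly_nonsing_inv {K : Type*} [Field K] {M : Matrix n n K}
    (hM : IsUnit M.det) {μ : K} (h : M.charpoly.IsRoot μ) : M⁻¹.charpoly.IsRoot μ⁻¹ := by
  lift M to (Matrix n n K)ˣ using (isUnit_iff_isUnit_det M).mpr hM
  rw [← mem_spectrum_iff_isRoot_charpoly] at h ⊢
  have hμ : μ ≠ 0 := spectrum.ne_zero_of_mem_of_unit h
  rw [← coe_units_inv]
  exact spectrum.inv_mem_iff (r := Units.mk0 μ hμ) |>.mp h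

theorem charpoly_nonsing_inv_mul_transpose_nonsing_inv {R : Type*} [CommRing R]
    {A : Matrix n n R} (hA : IsUnit A.det) :
    (A * (Aᵀ)⁻¹)⁻¹.charpoly = (A * (Aᵀ)⁻¹).charpoly := by
  have hAT : IsUnit Aᵀ.det := by rwa [det_transpose]
  calc (A * (Aᵀ)⁻¹)⁻¹.charpoly = (Aᵀ * A⁻¹).charpoly := by
        rw [mul_inv_rev, nonsing_inv_nonsing_inv _ hAT]
    _ = (A⁻¹ * Aᵀ).charpoly := charpoly_mul_comm _ _
    _ = (A * (Aᵀ)⁻¹)ᵀ.charpoly := by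
        rw [transpose_mul, transpose_nonsing_inv, transpose_transpose]
    _ = (A * (Aᵀ)⁻¹).charpoly := charpoly_transpose _

end Matrix

theorem stmt_3_general {n : ℕ} {K : Type*} [Field K]
    (A : Matrix (Fin n) (Fin n) K) (hA : IsUnit A.det)
    (lam : K) (h : (A * (Aᵀ)⁻¹).charpoly.IsRoot lam) :
    (A * (Aᵀ)⁻¹).charpoly.IsRoot lam⁻¹ := by
  have hM : IsUnit (A * (Aᵀ)⁻¹).det := by
    rw [det_mul]
    exact hA.mul (isUnit_nonsing_inv_det _ (by rwa [det_transpose]))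
  rw [← charpoly_nonsing_inv_mul_transpose_nonsing_inv hA]
  exact isRoot_charpoly_nonsing_inv hM h

/-- The eigenvalues of `A (Aᵀ)⁻¹` for an invertible matrix `A` over an algebraically
closed field come in reciprocal pairs: if `λ` is a root of the characteristic
polynomial of `A (Aᵀ)⁻¹`, then so is `λ⁻¹`. -/
theorem stmt_3 {n : ℕ} {K : Type*} [Field K] [IsAlgClosed K]
    (A : Matrix (Fin n) (Fin n) K) (hA : IsUnit A.det)
    (lam : K) (h : (A * (Aᵀ)⁻¹).charpoly.IsRoot lam) :
    (A * (Aᵀ)⁻¹).charpoly.IsRoot lam⁻¹ :=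
  stmt_3_general A hA lam h
end

section
/- For any antidiagonal n×n classical matrix S (S[i][j]=0 unless i+j=n+1) one has (S⊗S)·R(q) = R(q)ᵀ·(S⊗S), where R(q) is the trigonometric R-matrix. -/
open Matrix Kronecker

/-!
Write `R(q) = 1 + (q - 1) D + (q - q⁻¹) N` with `D = Σ eᵢᵢ ⊗ eᵢᵢ` (symmetric) and
`N = Σ_{j<i} eᵢⱼ ⊗ eⱼᵢ`. An antidiagonal `S` sends `eⱼ` to a multiple of `e_{n-1-j}`, and
`j ↦ n - 1 - j` preserves equality of indices but reverses their order. Hence conjugation by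
`S ⊗ S` fixes `D` and turns `N` into `Nᵀ`, which is the claim.
-/

/-- The trigonometric R-matrix
`R(q) = Σ_{i,j} e_{ii}⊗e_{jj} + (q-1) Σ_i e_{ii}⊗e_{ii} + (q-q⁻¹) Σ_{j<i} e_{ij}⊗e_{ji}`. -/
noncomputable def Rmat {K : Type*} [Field K] (n : ℕ) (q : K) :
    Matrix (Fin n × Fin n) (Fin n × Fin n) K :=
  (∑ i : Fin n, ∑ j : Fin n,
      single i i (1 : K) ⊗ₖ single j j (1 : K))
    + (q - 1) • (∑ i : Fin n, single i i (1 : K) ⊗ₖ single i i (1 : K))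
    + (q - q⁻¹) • (∑ i : Fin n, ∑ j : Fin n,
        if j < i then single i j (1 : K) ⊗ₖ single j i (1 : K) else 0)

/-- The permutation (flip) matrix `P = Σ_{i,j} e_{ij}⊗e_{ji}`. -/
def Pmat {K : Type*} [Field K] (n : ℕ) :
    Matrix (Fin n × Fin n) (Fin n × Fin n) K :=
  ∑ i : Fin n, ∑ j : Fin n, single i j (1 : K) ⊗ₖ single j i (1 : K)

section
variable {ι R : Type*} [Fintype ι] [DecidableEq ι] [Semiring R]

lemma sum_single_kronecker_single_eq_one :
    ∑ i : ι, ∑ j : ι, single i i (1 : R) ⊗ₖ single j j (1 : R) = 1 := by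
  ext ⟨a, b⟩ ⟨c, d⟩
  simp [single_kronecker_single, Matrix.sum_apply, single_apply, one_apply, ite_and]

def diagKron (ι R : Type*) [Fintype ι] [DecidableEq ι] [Semiring R] : Matrix (ι × ι) (ι × ι) R :=
  ∑ i : ι, single i i (1 : R) ⊗ₖ single i i (1 : R)

lemma diagKron_apply (a b c d : ι) :
    diagKron ι R (a, b) (c, d) = if a = b ∧ a = c ∧ a = d then 1 else 0 := by
  simp [diagKron, single_kronecker_single, Matrix.sum_apply, single_apply, ite_and]

lemma diagKron_transpose : (diagKron ι R)ᵀ = diagKron ι R := by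
  ext ⟨a, b⟩ ⟨c, d⟩
  simp only [transpose_apply, diagKron_apply]
  grind

lemma kronecker_mul_diagKron_apply (A B : Matrix ι ι R) (a b c d : ι) :
    ((A ⊗ₖ B) * diagKron ι R) (a, b) (c, d) = if c = d then A a c * B b c else 0 := by
  simp [mul_apply, Fintype.sum_prod_type, diagKron_apply, ite_and, eq_comm]

lemma diagKron_mul_kronecker_apply (A B : Matrix ι ι R) (a b c d : ι) :
    (diagKron ι R * (A ⊗ₖ B)) (a, b) (c, d) = if a = b then A a c * B a d else 0 := by
  simp [mul_apply, Fintype.sum_prod_type, diagKron_apply, ite_and]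
end

section
variable {ι R : Type*} [Fintype ι] [LinearOrder ι] [Semiring R]

def lowerFlip (ι R : Type*) [Fintype ι] [LinearOrder ι] [Semiring R] : Matrix (ι × ι) (ι × ι) R :=
  ∑ i : ι, ∑ j : ι, if j < i then single i j (1 : R) ⊗ₖ single j i (1 : R) else 0

lemma lowerFlip_apply (a b c d : ι) :
    lowerFlip ι R (a, b) (c, d) = if c = b ∧ d = a ∧ b < a then 1 else 0 := by
  simp only [lowerFlip, single_kronecker_single, mul_one, Matrix.sum_apply,
    apply_ite (fun M : Matrix _ _ R => M (a, b) (c, d)), single_apply, Matrix.zero_apply,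
    Prod.mk.injEq]
  rw [Fintype.sum_eq_single a fun i hi => Fintype.sum_eq_zero _ fun j => by simp [hi],
    Fintype.sum_eq_single b fun j hj => by simp [hj]]
  grind

lemma kronecker_mul_lowerFlip_apply (A B : Matrix ι ι R) (a b c d : ι) :
    ((A ⊗ₖ B) * lowerFlip ι R) (a, b) (c, d) = if c < d then A a d * B b c else 0 := by
  simp [mul_apply, Fintype.sum_prod_type, lowerFlip_apply, ite_and]

lemma lowerFlip_transpose_mul_kronecker_apply (A B : Matrix ι ι R) (a b c d : ι) :
    ((lowerFlip ι R)ᵀ * (A ⊗ₖ B)) (a, b) (c, d) = if a < b then A b c * B a d else 0 := by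
  simp [mul_apply, Fintype.sum_prod_type, lowerFlip_apply, ite_and]
end

def IsAntidiagonal {n : ℕ} {R : Type*} [Zero R] (S : Matrix (Fin n) (Fin n) R) : Prop :=
  ∀ i j : Fin n, (i : ℕ) + (j : ℕ) ≠ n - 1 → S i j = 0

section
variable {n : ℕ} {R : Type*} [Semiring R] {S : Matrix (Fin n) (Fin n) R}

lemma IsAntidiagonal.mul_eq_zero (hS : IsAntidiagonal S) (a c b d : Fin n)
    (h : (a : ℕ) + c ≠ b + d) : S a c * S b d = 0 := by
  by_cases hac : (a : ℕ) + c = n - 1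
  · rw [hS b d (by omega), mul_zero]
  · rw [hS a c hac, zero_mul]

lemma IsAntidiagonal.kronecker_mul_diagKron (hS : IsAntidiagonal S) :
    (S ⊗ₖ S) * diagKron (Fin n) R = diagKron (Fin n) R * (S ⊗ₖ S) := by
  ext ⟨a, b⟩ ⟨c, d⟩
  rw [kronecker_mul_diagKron_apply, diagKron_mul_kronecker_apply]
  rcases eq_or_ne c d with rfl | hcd <;> rcases eq_or_ne a b with rfl | hab
  · simp
  · simp [hab, hS.mul_eq_zero a c b c (by omega)]
  · simp [hcd, hS.mul_eq_zero a c a d (by omega)]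
  · simp [hab, hcd]

end

lemma IsAntidiagonal.kronecker_mul_lowerFlip {n : ℕ} {R : Type*} [CommSemiring R]
    {S : Matrix (Fin n) (Fin n) R} (hS : IsAntidiagonal S) :
    (S ⊗ₖ S) * lowerFlip (Fin n) R = (lowerFlip (Fin n) R)ᵀ * (S ⊗ₖ S) := by
  ext ⟨a, b⟩ ⟨c, d⟩
  rw [kronecker_mul_lowerFlip_apply, lowerFlip_transpose_mul_kronecker_apply]
  by_cases hcd : c < d <;> by_cases hab : a < b
  · rw [if_pos hcd, if_pos hab, mul_comm]
  · simp [hcd, hab, hS.mul_eq_zero a d b c (by omega)]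
  · simp [hcd, hab, mul_comm, hS.mul_eq_zero a d b c (by omega)]
  · simp [hcd, hab]

lemma Rmat_eq {K : Type*} [Field K] (n : ℕ) (q : K) :
    Rmat n q = 1 + (q - 1) • diagKron (Fin n) K + (q - q⁻¹) • lowerFlip (Fin n) K := by
  rw [Rmat, sum_single_kronecker_single_eq_one]
  rfl

theorem stmt_11_general {n : ℕ} {K : Type*} [Field K] (q : K)
    (S : Matrix (Fin n) (Fin n) K)
    (hS : ∀ i j : Fin n, (i : ℕ) + (j : ℕ) ≠ n - 1 → S i j = 0) :
    (S ⊗ₖ S) * Rmat n q = (Rmat n q)ᵀ * (S ⊗ₖ S) := by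
  have hS : IsAntidiagonal S := hS
  simp only [Rmat_eq, transpose_add, transpose_smul, transpose_one, diagKron_transpose, mul_add,
    add_mul, mul_one, one_mul, Matrix.mul_smul, Matrix.smul_mul, hS.kronecker_mul_diagKron,
    hS.kronecker_mul_lowerFlip]

/-- For any antidiagonal matrix `S` one has `(S⊗S)·R(q) = R(q)ᵀ·(S⊗S)`. -/
theorem stmt_11 {n : ℕ} {K : Type*} [Field K] (q : K) (hq : q ≠ 0)
    (S : Matrix (Fin n) (Fin n) K)
    (hS : ∀ i j : Fin n, (i : ℕ) + (j : ℕ) ≠ n - 1 → S i j = 0) :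
    (S ⊗ₖ S) * Rmat n q = (Rmat n q)ᵀ * (S ⊗ₖ S) :=
  stmt_11_general q S hS
end
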